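/- Let F be a field of characteristic 2 and let R = F[t, t⁻¹] be the ring of Laurent polynomials over F. The kernel of the R-linear map R² → R given by (x, y) ↦ (t² + t + 1)(t + 1)·x + (t⁻² + t⁻¹ + 1)(t⁻¹ + 1)·y equals the cyclic submodule generated by (1, t³); in particular it is a free R-module of rank 1 and hence an infinite-dimensional F-vector space. -/

import Mathlib

/-!
Writing `p = (t² + t + 1)(t + 1)`, the second coefficient is `t⁻³ p`, so the map is
`(x, y) ↦ p (x + t⁻³ y)`. Since `F[t, t⁻¹]` is a domain and `p ≠ 0`, the kernel is
`{(x, y) | y = -t³ x}`, and `-t³ = t³` in characteristic 2. The first projection identifies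
the kernel with `F[t, t⁻¹]`, which has the infinite `F`-basis `(tⁿ)_{n ∈ ℤ}`.
-/

open LaurentPolynomial

theorem ker_coprod_mulLeft_mul_of_mul_eq_one {R : Type*} [CommRing R] [IsDomain R] {p v w : R}
    (hp : p ≠ 0) (hvw : v * w = 1) :
    LinearMap.ker (LinearMap.coprod (LinearMap.mulLeft R p) (LinearMap.mulLeft R (v * p))) =
      Submodule.span R {((1 : R), -w)} := by
  ext ⟨x, y⟩
  simp only [LinearMap.mem_ker, LinearMap.coprod_apply, LinearMap.mulLeft_apply,
    Submodule.mem_span_singleton, Prod.smul_mk, Prod.mk.injEq, smul_eq_mul, mul_one]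
  constructor
  · intro h
    have hx : x + v * y = 0 := mul_left_cancel₀ hp (by linear_combination h)
    exact ⟨x, rfl, by linear_combination y * hvw - w * hx⟩
  · rintro ⟨c, rfl, rfl⟩
    linear_combination (-(p * c)) * hvw

theorem not_finite_span_singleton_one_prod {F R : Type*} [CommSemiring F] [CommRing R]
    [Algebra F R] (hR : ¬ Module.Finite F R) (w : R) :
    ¬ Module.Finite F (Submodule.span R {((1 : R), w)}) := by
  intro _
  have hfst : Function.Surjective
      ((LinearMap.fst F R R).comp ((Submodule.span R {((1 : R), w)}).subtype.restrictScalars F)) :=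
    fun c => ⟨⟨c • ((1 : R), w), Submodule.smul_mem _ c (Submodule.mem_span_singleton_self _)⟩,
      by simp⟩
  exact hR (Module.Finite.of_surjective _ hfst)

namespace LaurentPolynomial

theorem not_finite (R : Type*) [CommSemiring R] [Nontrivial R] :
    ¬ Module.Finite R R[T;T⁻¹] := fun _ =>
  have := Module.Finite.finite_basis (AddMonoidAlgebra.basis ℤ R)
  _root_.not_finite ℤ

theorem T_neg_three_mul_T_three (R : Type*) [Semiring R] : (T (-3) * T 3 : R[T;T⁻¹]) = 1 := by
  rw [← T_add, neg_add_cancel, T_zero]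

theorem T_neg_two_add_T_neg_one_add_one_mul_eq (R : Type*) [CommSemiring R] :
    ((T (-2) + T (-1) + 1) * (T (-1) + 1) : R[T;T⁻¹]) =
      T (-3) * ((T 2 + T 1 + 1) * (T 1 + 1)) := by
  simp only [mul_add, add_mul, mul_one, one_mul, ← T_add]
  norm_num
  ring

theorem T_two_add_T_one_add_one_mul_ne_zero (R : Type*) [CommSemiring R] [Nontrivial R] :
    ((T 2 + T 1 + 1) * (T 1 + 1) : R[T;T⁻¹]) ≠ 0 := by
  have h : ((T 2 + T 1 + 1) * (T 1 + 1) : R[T;T⁻¹]) =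
      Polynomial.toLaurent ((Polynomial.X ^ 2 + Polynomial.X + 1) * (Polynomial.X + 1)) := by
    simp
  rw [h, Polynomial.toLaurent_ne_zero]
  intro h0
  simpa using congrArg (Polynomial.eval 0) h0

end LaurentPolynomial

/-- over `R = F[t,t⁻¹]` with `F` of characteristic 2, the kernel of
the `R`-linear map `R² → R`,
`(x, y) ↦ (t² + t + 1)(t + 1)x + (t⁻² + t⁻¹ + 1)(t⁻¹ + 1)y` is the cyclic
submodule generated by `(1, t³)`; in particular it is not a finite-dimensional
`F`-vector space. -/
theorem statement17 (F : Type*) [Field F] (hF : ringChar F = 2) :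
    LinearMap.ker
        (LinearMap.coprod
          (LinearMap.mulLeft (LaurentPolynomial F)
            ((T 2 + T 1 + (1 : LaurentPolynomial F)) * (T 1 + 1)))
          (LinearMap.mulLeft (LaurentPolynomial F)
            ((T (-2) + T (-1) + (1 : LaurentPolynomial F)) * (T (-1) + 1)))) =
      Submodule.span (LaurentPolynomial F)
        {((1 : LaurentPolynomial F), (T 3 : LaurentPolynomial F))} ∧
    ¬ Module.Finite F
        (LinearMap.ker
          (LinearMap.coprod
            (LinearMap.mulLeft (LaurentPolynomial F)
              ((T 2 + T 1 + (1 : LaurentPolynomial F)) * (T 1 + 1)))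
            (LinearMap.mulLeft (LaurentPolynomial F)
              ((T (-2) + T (-1) + (1 : LaurentPolynomial F)) * (T (-1) + 1))))) := by
  have : CharP F 2 := ringChar.of_eq hF
  have : CharP (LaurentPolynomial F) 2 :=
    charP_of_injective_algebraMap (algebraMap F _).injective 2
  have hker := ker_coprod_mulLeft_mul_of_mul_eq_one (T_two_add_T_one_add_one_mul_ne_zero F)
    (T_neg_three_mul_T_three F)
  rw [CharTwo.neg_eq (T 3 : LaurentPolynomial F), ← T_neg_two_add_T_neg_one_add_one_mul_eq] at hker
  exact ⟨hker, hker ▸ not_finite_span_singleton_one_prod (not_finite F) _⟩
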